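/- Let G be a σ-stable subset of L⁰(𝓕) (real-valued measurable functions modulo a.s. equality) and ε ∈ L⁰₊₊(𝓕). If G is bounded above in L⁰(𝓕), then there exists g_ε ∈ G with sup G < g_ε + ε a.s. on Ω. Dually, if G is bounded below, there exists g_ε ∈ G with inf G > g_ε − ε a.s. on Ω. -/

import Mathlib

open MeasureTheory Filter Set

variable {Ω : Type*} [MeasurableSpace Ω]

/-- A countable measurable partition of `Ω`. -/
def IsMeasPartition (A : ℕ → Set Ω) : Prop :=
  (∀ n, MeasurableSet (A n)) ∧ Pairwise (Function.onFun Disjoint A) ∧ (⋃ n, A n) = Set.univ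

/-- `b` is an a.e. upper bound of the family `S ⊆ L⁰(𝓕)`. -/
def IsAEUB {Ω : Type*} [MeasurableSpace Ω] (μ : MeasureTheory.Measure Ω)
    (S : Set (Ω → ℝ)) (b : Ω → ℝ) : Prop :=
  ∀ f ∈ S, ∀ᵐ ω ∂μ, f ω ≤ b ω

/-- `b` is the supremum `⋁S` of the family `S` in the a.e. order of `L⁰(𝓕)`. -/
def IsAELUB {Ω : Type*} [MeasurableSpace Ω] (μ : MeasureTheory.Measure Ω)
    (S : Set (Ω → ℝ)) (b : Ω → ℝ) : Prop :=
  IsAEUB μ S b ∧ ∀ c : Ω → ℝ, IsAEUB μ S c → ∀ᵐ ω ∂μ, b ω ≤ c ω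

/-- `b` is an a.e. lower bound of the family `S ⊆ L⁰(𝓕)`. -/
def IsAELB {Ω : Type*} [MeasurableSpace Ω] (μ : MeasureTheory.Measure Ω)
    (S : Set (Ω → ℝ)) (b : Ω → ℝ) : Prop :=
  ∀ f ∈ S, ∀ᵐ ω ∂μ, b ω ≤ f ω

/-- `b` is the infimum `⋀S` of the family `S` in the a.e. order of `L⁰(𝓕)`. -/
def IsAEGLB {Ω : Type*} [MeasurableSpace Ω] (μ : MeasureTheory.Measure Ω)
    (S : Set (Ω → ℝ)) (b : Ω → ℝ) : Prop :=
  IsAELB μ S b ∧ ∀ c : Ω → ℝ, IsAELB μ S c → ∀ᵐ ω ∂μ, c ω ≤ b ω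


/-! σ-stability makes `G` upward directed: glue `a` and `b` along `{b ≤ a}` and its complement.
For a directed family, a sequence `gₙ ∈ G` with `∫ arctan gₙ → sup_{g ∈ G} ∫ arctan g` has a
pointwise supremum dominating every `g ∈ G` a.s., since `∫ (arctan g - sup arctan gₙ)⁺` is at most
`∫ arctan k - ∫ arctan gₙ` for a common upper bound `k` of `g` and `gₙ`. So `sup gₙ = ⋁G` a.s.,
and gluing the `gₙ` along the measurable sets `{sup gₙ < gₙ + ε}`, which cover `Ω` a.s., gives
`g_ε`. The infimum is the supremum of `-G`. -/

open scoped Pointwise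
open Real

def IsSigmaStable (μ : Measure Ω) (G : Set (Ω → ℝ)) : Prop :=
  ∀ A : ℕ → Set Ω, IsMeasPartition A → ∀ gs : ℕ → (Ω → ℝ), (∀ n, gs n ∈ G) →
    ∃ g ∈ G, ∀ n, ∀ᵐ ω ∂μ, ω ∈ A n → g ω = gs n ω

lemma exists_isMeasPartition_subset_union_compl {P : ℕ → Set Ω}
    (hP : ∀ n, MeasurableSet (P n)) :
    ∃ A : ℕ → Set Ω, IsMeasPartition A ∧ ∀ n, A n ⊆ P n ∪ (⋃ m, P m)ᶜ := by
  set Q : ℕ → Set Ω := fun n => P n ∪ (⋃ m, P m)ᶜ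
  have hQ : ∀ n, MeasurableSet (Q n) := fun n => (hP n).union (MeasurableSet.iUnion hP).compl
  refine ⟨disjointed Q, ⟨MeasurableSet.disjointed hQ, disjoint_disjointed Q, ?_⟩,
    disjointed_subset Q⟩
  rw [iUnion_disjointed]
  refine eq_univ_of_forall fun ω => ?_
  by_cases hω : ω ∈ ⋃ m, P m
  · obtain ⟨n, hn⟩ := mem_iUnion.1 hω
    exact mem_iUnion.2 ⟨n, Or.inl hn⟩
  · exact mem_iUnion.2 ⟨0, Or.inr hω⟩

namespace IsSigmaStable

variable {μ : Measure Ω} {G : Set (Ω → ℝ)}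

lemma exists_mem_glue (hG : IsSigmaStable μ G) {P : ℕ → Set Ω}
    (hP : ∀ n, MeasurableSet (P n)) {gs : ℕ → Ω → ℝ} (hgs : ∀ n, gs n ∈ G) :
    ∃ g ∈ G, ∀ᵐ ω ∂μ, (∃ n, ω ∈ P n) → ∃ n, ω ∈ P n ∧ g ω = gs n ω := by
  obtain ⟨A, hA, hAP⟩ := exists_isMeasPartition_subset_union_compl hP
  obtain ⟨g, hg, hgA⟩ := hG A hA gs hgs
  refine ⟨g, hg, ?_⟩
  filter_upwards [ae_all_iff.2 hgA] with ω hω ⟨n, hn⟩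
  obtain ⟨m, hm⟩ := mem_iUnion.1 (hA.2.2 ▸ mem_univ ω : ω ∈ ⋃ m, A m)
  refine ⟨m, ?_, hω m hm⟩
  rcases hAP m hm with h | h
  · exact h
  · exact absurd (mem_iUnion.2 ⟨n, hn⟩) h

lemma directedOn (hG : IsSigmaStable μ G) (hmeas : ∀ g ∈ G, Measurable g) :
    DirectedOn (fun f g => f ≤ᵐ[μ] g) G := by
  intro a ha b hb
  set gs : ℕ → Ω → ℝ := fun n => if n = 0 then a else b
  have hgs : ∀ n, gs n ∈ G := fun n => by by_cases hn : n = 0 <;> simp [gs, hn, ha, hb]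
  obtain ⟨k, hk, hglue⟩ := hG.exists_mem_glue (P := fun n => {ω | max (a ω) (b ω) ≤ gs n ω})
    (fun n => measurableSet_le ((hmeas a ha).max (hmeas b hb)) (hmeas _ (hgs n))) hgs
  have hmax : ∀ᵐ ω ∂μ, max (a ω) (b ω) ≤ k ω := by
    filter_upwards [hglue] with ω hω
    obtain ⟨n, hn, hkn⟩ := hω <| by
      rcases le_total (b ω) (a ω) with h | h
      · exact ⟨0, by simp [gs, h]⟩
      · exact ⟨1, by simp [gs, h]⟩
    exact hkn ▸ hn
  exact ⟨k, hk, hmax.mono fun ω h => (le_max_left _ _).trans h,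
    hmax.mono fun ω h => (le_max_right _ _).trans h⟩

end IsSigmaStable

section Exhaustion

variable {μ : Measure Ω} [IsFiniteMeasure μ]

lemma exists_seq_ae_le_iSup_of_directedOn {H : Set (Ω → ℝ)} (hne : H.Nonempty)
    (hmeas : ∀ f ∈ H, Measurable f) {C : ℝ} (hC : ∀ f ∈ H, ∀ ω, |f ω| ≤ C)
    (hdir : DirectedOn (fun f g => f ≤ᵐ[μ] g) H) :
    ∃ fs : ℕ → Ω → ℝ, (∀ n, fs n ∈ H) ∧ ∀ f ∈ H, ∀ᵐ ω ∂μ, f ω ≤ ⨆ n, fs n ω := by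
  have hint : ∀ f ∈ H, Integrable f μ := fun f hf =>
    Integrable.of_bound (hmeas f hf).aestronglyMeasurable C (ae_of_all _ (hC f hf))
  have hbdd : BddAbove ((fun f => ∫ ω, f ω ∂μ) '' H) := by
    refine ⟨C * μ.real univ, forall_mem_image.2 fun f hf => ?_⟩
    exact (Real.le_norm_self _).trans (norm_integral_le_of_norm_le_const (ae_of_all _ (hC f hf)))
  obtain ⟨t, -, ht_lim, ht⟩ := exists_seq_tendsto_sSup (hne.image _) hbdd
  choose fs hfs hfs_int using ht
  beta_reduce at hfs_int
  refine ⟨fs, hfs, fun f hf => ?_⟩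
  set u : Ω → ℝ := fun ω => ⨆ n, fs n ω
  have hu_bdd : ∀ ω, BddAbove (range fun n => fs n ω) := fun ω =>
    ⟨C, forall_mem_range.2 fun n => (le_abs_self _).trans (hC _ (hfs n) ω)⟩
  have hu_int : Integrable u μ := by
    refine Integrable.of_bound (Measurable.iSup fun n => hmeas _ (hfs n)).aestronglyMeasurable C
      (ae_of_all _ fun ω => abs_le.2 ⟨?_, ciSup_le fun n => (le_abs_self _).trans (hC _ (hfs n) ω)⟩)
    exact (neg_le_of_abs_le (hC _ (hfs 0) ω)).trans (le_ciSup (hu_bdd ω) 0)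
  set φ : Ω → ℝ := fun ω => max (f ω - u ω) 0
  have hφ_int : Integrable φ μ := ((hint f hf).sub hu_int).pos_part
  have hφ_le : ∀ n, ∫ ω, φ ω ∂μ ≤ sSup ((fun f => ∫ ω, f ω ∂μ) '' H) - t n := by
    intro n
    obtain ⟨k, hk, hfk, hnk⟩ := hdir f hf (fs n) (hfs n)
    calc ∫ ω, φ ω ∂μ ≤ ∫ ω, k ω - fs n ω ∂μ := by
          refine integral_mono_ae hφ_int ((hint k hk).sub (hint _ (hfs n))) ?_
          filter_upwards [hfk, hnk] with ω h1 h2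
          have := le_ciSup (hu_bdd ω) n
          exact max_le (by linarith) (by linarith)
      _ = ∫ ω, k ω ∂μ - t n := by rw [integral_sub (hint k hk) (hint _ (hfs n)), hfs_int]
      _ ≤ _ := by gcongr; exact le_csSup hbdd ⟨k, hk, rfl⟩
  have hφ_zero : φ =ᵐ[μ] 0 := by
    refine (integral_eq_zero_iff_of_nonneg (fun ω => le_max_right _ _) hφ_int).1 ?_
    refine le_antisymm ?_ (integral_nonneg fun ω => le_max_right _ _)
    have := (tendsto_const_nhds (x := sSup ((fun f => ∫ ω, f ω ∂μ) '' H))).sub ht_lim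
    rw [sub_self] at this
    exact ge_of_tendsto' this hφ_le
  filter_upwards [hφ_zero] with ω hω
  exact sub_nonpos.1 (max_eq_right_iff.1 hω)

lemma exists_seq_ae_le_of_forall_le_of_directedOn {G : Set (Ω → ℝ)} (hne : G.Nonempty)
    (hmeas : ∀ g ∈ G, Measurable g) (hdir : DirectedOn (fun f g => f ≤ᵐ[μ] g) G) :
    ∃ gs : ℕ → Ω → ℝ, (∀ n, gs n ∈ G) ∧
      ∀ g ∈ G, ∀ᵐ ω ∂μ, ∀ x, (∀ n, gs n ω ≤ x) → g ω ≤ x := by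
  have hdir' : DirectedOn (fun f g => f ≤ᵐ[μ] g) ((fun g => arctan ∘ g) '' G) := by
    rintro _ ⟨a, ha, rfl⟩ _ ⟨b, hb, rfl⟩
    obtain ⟨k, hk, hak, hbk⟩ := hdir a ha b hb
    exact ⟨_, mem_image_of_mem _ hk, hak.mono fun ω h => arctan_strictMono.monotone h,
      hbk.mono fun ω h => arctan_strictMono.monotone h⟩
  obtain ⟨fs, hfs, hdom⟩ := exists_seq_ae_le_iSup_of_directedOn (hne.image _)
    (forall_mem_image.2 fun g hg => measurable_arctan.comp (hmeas g hg))
    (forall_mem_image.2 fun g _ ω => (abs_lt.2 (arctan_mem_Ioo (g ω))).le) hdir'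
  choose gs hgs hgs_fs using hfs
  refine ⟨gs, hgs, fun g hg => ?_⟩
  filter_upwards [hdom _ (mem_image_of_mem _ hg)] with ω hω x hx
  refine arctan_strictMono.le_iff_le.1 (hω.trans (ciSup_le fun n => ?_))
  rw [← hgs_fs n]
  exact arctan_strictMono.monotone (hx n)

end Exhaustion

lemma ae_isLUB_range_of_isAELUB {μ : Measure Ω} {G : Set (Ω → ℝ)} {S : Ω → ℝ}
    (hS : IsAELUB μ G S) {gs : ℕ → Ω → ℝ} (hgs : ∀ n, gs n ∈ G)
    (hdom : ∀ g ∈ G, ∀ᵐ ω ∂μ, ∀ x, (∀ n, gs n ω ≤ x) → g ω ≤ x) :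
    ∀ᵐ ω ∂μ, IsLUB (range fun n => gs n ω) (S ω) := by
  classical
  set c : Ω → ℝ := fun ω => if BddAbove (range fun n => gs n ω) then ⨆ n, gs n ω else S ω
  have hc : IsAEUB μ G c := by
    intro g hg
    filter_upwards [hdom g hg, hS.1 g hg] with ω hω hgS
    by_cases hb : BddAbove (range fun n => gs n ω)
    · simpa only [c, if_pos hb] using hω _ fun n => le_ciSup hb n
    · simpa only [c, if_neg hb] using hgS
  filter_upwards [hS.2 c hc, ae_all_iff.2 fun n => hS.1 _ (hgs n)] with ω hSc hub
  have hub' : S ω ∈ upperBounds (range fun n => gs n ω) := forall_mem_range.2 hub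
  refine ⟨hub', fun x hx => ?_⟩
  rw [show c ω = ⨆ n, gs n ω from if_pos ⟨_, hub'⟩] at hSc
  exact hSc.trans (ciSup_le fun n => hx (mem_range_self n))

namespace IsSigmaStable

variable {μ : Measure Ω} {G : Set (Ω → ℝ)}

lemma exists_mem_ae_lt_add_of_isAELUB [IsFiniteMeasure μ] (hG : IsSigmaStable μ G)
    (hne : G.Nonempty) (hmeas : ∀ g ∈ G, Measurable g) {ε : Ω → ℝ} (hεm : Measurable ε)
    (hε : ∀ᵐ ω ∂μ, 0 < ε ω) {S : Ω → ℝ} (hS : IsAELUB μ G S) :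
    ∃ g ∈ G, ∀ᵐ ω ∂μ, S ω < g ω + ε ω := by
  obtain ⟨gs, hgs, hdom⟩ :=
    exists_seq_ae_le_of_forall_le_of_directedOn hne hmeas (hG.directedOn hmeas)
  -- `w` is a measurable version of `S`, needed to glue along measurable sets
  set w : Ω → ℝ := fun ω => ⨆ n, gs n ω
  have hw : Measurable w := Measurable.iSup fun n => hmeas _ (hgs n)
  obtain ⟨g, hg, hglue⟩ := hG.exists_mem_glue (P := fun n => {ω | w ω < gs n ω + ε ω})
    (fun n => measurableSet_lt hw ((hmeas _ (hgs n)).add hεm)) hgs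
  refine ⟨g, hg, ?_⟩
  filter_upwards [ae_isLUB_range_of_isAELUB hS hgs hdom, hε, hglue] with ω hlub hεω hω
  have hwS : w ω = S ω := hlub.ciSup_eq
  obtain ⟨_, ⟨n, rfl⟩, hn⟩ := (lt_isLUB_iff hlub).1 (sub_lt_self (S ω) hεω)
  obtain ⟨m, hm, hgm⟩ := hω ⟨n, show w ω < gs n ω + ε ω by linarith⟩
  change w ω < gs m ω + ε ω at hm
  rwa [hwS, ← hgm] at hm

lemma neg (hG : IsSigmaStable μ G) : IsSigmaStable μ (-G) := by
  intro A hA gs hgs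
  obtain ⟨g, hg, hgA⟩ := hG A hA (fun n => -gs n) hgs
  refine ⟨-g, by simpa using hg, fun n => (hgA n).mono fun ω h hω => ?_⟩
  simpa using congrArg Neg.neg (h hω)

end IsSigmaStable

lemma IsAEGLB.isAELUB_neg {μ : Measure Ω} {G : Set (Ω → ℝ)} {I : Ω → ℝ} (hI : IsAEGLB μ G I) :
    IsAELUB μ (-G) (-I) := by
  refine ⟨fun f hf => (hI.1 _ hf).mono fun ω h => ?_, fun c hc => ?_⟩
  · simp only [Pi.neg_apply] at h ⊢
    linarith
  · have hlb : IsAELB μ G (-c) := fun f hf =>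
      (hc (-f) (by simpa using hf)).mono fun ω h => by
        simp only [Pi.neg_apply] at h ⊢
        linarith
    filter_upwards [hI.2 _ hlb] with ω h
    simp only [Pi.neg_apply] at h ⊢
    linarith

/-- if `G ⊆ L⁰(𝓕)` is σ-stable and bounded above then the supremum `⋁G`
is `ε`-approximated from below by an element of `G`, a.s. on the whole of `Ω`; dually for
the infimum when `G` is bounded below. -/
theorem sigmaStable_sup_approx (μ : Measure Ω) [IsProbabilityMeasure μ]
    (G : Set (Ω → ℝ)) (hne : G.Nonempty) (hmeas : ∀ g ∈ G, Measurable g)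
    (hG : ∀ A : ℕ → Set Ω, IsMeasPartition A → ∀ gs : ℕ → (Ω → ℝ), (∀ n, gs n ∈ G) →
      ∃ g ∈ G, ∀ n, ∀ᵐ ω ∂μ, ω ∈ A n → g ω = gs n ω)
    (ε : Ω → ℝ) (hεm : Measurable ε) (hε : ∀ᵐ ω ∂μ, 0 < ε ω) :
    (∀ S : Ω → ℝ, IsAELUB μ G S → ∃ g ∈ G, ∀ᵐ ω ∂μ, S ω < g ω + ε ω) ∧
    (∀ I : Ω → ℝ, IsAEGLB μ G I → ∃ g ∈ G, ∀ᵐ ω ∂μ, g ω - ε ω < I ω) := by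
  have hG' : IsSigmaStable μ G := hG
  refine ⟨fun S hS => hG'.exists_mem_ae_lt_add_of_isAELUB hne hmeas hεm hε hS, fun I hI => ?_⟩
  have hmeas_neg : ∀ g ∈ -G, Measurable g := fun g hg => by simpa using (hmeas _ hg).neg
  obtain ⟨g, hg, hlt⟩ :=
    hG'.neg.exists_mem_ae_lt_add_of_isAELUB hne.neg hmeas_neg hεm hε hI.isAELUB_neg
  refine ⟨-g, hg, hlt.mono fun ω h => ?_⟩
  simp only [Pi.neg_apply] at h ⊢
  linarith
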